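/- arXiv:0811.3233 — 6 statements merged into one kernel-verified Lean document; each statement's English description precedes it below -/
import Mathlib

section
/- For every positive even integer n with n ≠ 2 and n ≠ 6, the Thue–Morse word contains a factor x of length n such that 1001 is both a prefix of x and a suffix of x. -/
/-- A cube is a non-empty word of the form `z ++ z ++ z`. -/
def IsCube {α : Type*} (u : List α) : Prop := ∃ z : List α, z ≠ [] ∧ u = z ++ z ++ z

/-- A finite word is cubefree if none of its factors is a cube. -/
def Cubefree {α : Type*} (w : List α) : Prop := ∀ u : List α, u <:+: w → ¬ IsCube u

/-- The Thue–Morse morphism `μ : 0 ↦ 01, 1 ↦ 10`. -/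
def mu : List (Fin 2) → List (Fin 2)
  | [] => []
  | a :: w => (if a = 0 then [0, 1] else [1, 0]) ++ mu w

/-- `x` is a factor of the Thue–Morse word (the limit of `μ^k(0)`). -/
def FactorTM (x : List (Fin 2)) : Prop := ∃ k : ℕ, x <:+: mu^[k] [0]

lemma mu_append (u v : List (Fin 2)) : mu (u ++ v) = mu u ++ mu v := by
  induction u with
  | nil => rfl
  | cons a w ih => simp [mu, ih]

lemma length_mu (w : List (Fin 2)) : (mu w).length = 2 * w.length := by
  induction w with
  | nil => rfl
  | cons a w ih => by_cases h : a = 0 <;> simp [mu, h, ih] <;> ring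

def tm (k : ℕ) : List (Fin 2) := mu^[k] [0]

lemma length_tm (k : ℕ) : (tm k).length = 2 ^ k := by
  induction k with
  | zero => rfl
  | succ k ih =>
    rw [tm, Function.iterate_succ_apply', ← tm, length_mu, ih, pow_succ]; ring

lemma mu_mono {u v : List (Fin 2)} (h : u <+: v) : mu u <+: mu v := by
  obtain ⟨w, rfl⟩ := h
  rw [mu_append]; exact List.prefix_append _ _

lemma tm_prefix_succ (k : ℕ) : tm k <+: tm (k+1) := by
  have : tm k <+: mu^[k] [0, 1] := by
    induction k with
    | zero => exact ⟨[1], rfl⟩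
    | succ m ihm =>
      rw [tm, Function.iterate_succ_apply', Function.iterate_succ_apply', ← tm]
      exact mu_mono ihm
  simpa [tm, Function.iterate_succ_apply, mu] using this

lemma tm_prefix {k k' : ℕ} (h : k ≤ k') : tm k <+: tm k' := by
  induction k' with
  | zero => simp_all
  | succ k' ih =>
    rcases Nat.lt_or_ge k (k'+1) with h' | h'
    · exact (ih (by omega)).trans (tm_prefix_succ k')
    · have : k = k' + 1 := by omega
      simp [this]

lemma mu_getD_even (w : List (Fin 2)) : ∀ j, j < w.length → (mu w).getD (2*j) 0 = w.getD j 0 := by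
  induction w with
  | nil => intro j hj; simp at hj
  | cons a w ih =>
    intro j hj
    match j with
    | 0 => fin_cases a <;> rfl
    | j+1 =>
      have h2 : 2*(j+1) = (2*j)+1+1 := by ring
      rw [h2]
      fin_cases a <;>
        simpa [mu] using ih j (by simpa using hj)

lemma mu_getD_odd (w : List (Fin 2)) : ∀ j, j < w.length → (mu w).getD (2*j+1) 0 = 1 - w.getD j 0 := by
  induction w with
  | nil => intro j hj; simp at hj
  | cons a w ih =>
    intro j hj
    match j with
    | 0 => fin_cases a <;> rfl
    | j+1 =>
      have h2 : 2*(j+1)+1 = (2*j+1)+1+1 := by ring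
      rw [h2]
      fin_cases a <;>
        simpa [mu] using ih j (by simpa using hj)

def T (i : ℕ) : Fin 2 := (tm (i+1)).getD i 0

lemma getD_prefix {u v : List (Fin 2)} (h : u <+: v) {i : ℕ} (hi : i < u.length) :
    u.getD i 0 = v.getD i 0 := by
  rw [List.getD_eq_getElem _ _ hi, List.getD_eq_getElem _ _ (lt_of_lt_of_le hi h.length_le)]
  exact h.getElem hi

lemma T_eq {k i : ℕ} (h : i < 2 ^ k) : T i = (tm k).getD i 0 := by
  have hi : i < 2 ^ (i+1) := lt_of_lt_of_le (Nat.lt_two_pow_self (n := i)) (Nat.pow_le_pow_right (by norm_num) (by omega))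
  rcases le_or_gt k (i+1) with h' | h'
  · exact (getD_prefix (tm_prefix h') (by rw [length_tm]; exact h)).symm
  · exact getD_prefix (tm_prefix (by omega)) (by rw [length_tm]; exact hi)

lemma T_double (i : ℕ) : T (2*i) = T i := by
  have hi : i < 2 ^ (i+1) := lt_of_lt_of_le (Nat.lt_two_pow_self (n := i)) (Nat.pow_le_pow_right (by norm_num) (by omega))
  have h2 : 2*i < 2 ^ (i+2) := by
    have : 2 ^ (i+2) = 2 * 2 ^ (i+1) := by ring
    omega
  rw [T_eq h2, T_eq hi, tm, Function.iterate_succ_apply', ← tm]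
  exact mu_getD_even _ i (by rw [length_tm]; exact hi)

lemma T_odd (i : ℕ) : T (2*i+1) = 1 - T i := by
  have hi : i < 2 ^ (i+1) := lt_of_lt_of_le (Nat.lt_two_pow_self (n := i)) (Nat.pow_le_pow_right (by norm_num) (by omega))
  have h2 : 2*i+1 < 2 ^ (i+2) := by
    have : 2 ^ (i+2) = 2 * 2 ^ (i+1) := by ring
    omega
  rw [T_eq h2, T_eq hi, tm, Function.iterate_succ_apply', ← tm]
  exact mu_getD_odd _ i (by rw [length_tm]; exact hi)

lemma T2 : T 2 = 1 := by rfl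
lemma T3 : T 3 = 0 := by rfl
lemma T4 : T 4 = 1 := by rfl
lemma T5 : T 5 = 0 := by rfl

/-- `Sp i` : the factor `10` occurs at position `i` of the Thue–Morse word. -/
def Sp (i : ℕ) : Prop := T i = 1 ∧ T (i+1) = 0

lemma Sp_of_one {i : ℕ} (h : T i = 1) : Sp (2*i) :=
  ⟨by rw [T_double]; exact h,
   by rw [show 2*i+1 = 2*i+1 from rfl, T_odd, h]; rfl⟩

lemma Sp_double {i : ℕ} (h : Sp i) : Sp (2*i) := Sp_of_one h.1

lemma Sp2 : Sp 2 := ⟨T2, T3⟩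
lemma Sp4 : Sp 4 := ⟨T4, T5⟩

lemma Sp_odd {b : ℕ} (h : Sp b) : Sp (4*b+3) := by
  constructor
  · rw [show 4*b+3 = 2*(2*b+1)+1 by ring, T_odd, T_odd, h.1]
    rfl
  · rw [show 4*b+3+1 = 2*(2*(b+1)) by ring, T_double, T_double, h.2]

def H1 (c : ℕ) : Prop := ∃ b, Sp b ∧ T (b+c) = 1
def H0 (c : ℕ) : Prop := ∃ b, Sp b ∧ T (b+c) = 0

lemma h1_double {c : ℕ} (h : H1 c) : H1 (2*c) := by
  obtain ⟨b, hb, h1⟩ := h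
  exact ⟨2*b, Sp_double hb, by rw [show 2*b+2*c = 2*(b+c) by ring, T_double]; exact h1⟩

lemma h0_double {c : ℕ} (h : H0 c) : H0 (2*c) := by
  obtain ⟨b, hb, h1⟩ := h
  exact ⟨2*b, Sp_double hb, by rw [show 2*b+2*c = 2*(b+c) by ring, T_double]; exact h1⟩

lemma h1_odd {c : ℕ} (h : H0 c) : H1 (2*c+1) := by
  obtain ⟨b, hb, h1⟩ := h
  refine ⟨2*b, Sp_double hb, ?_⟩
  rw [show 2*b+(2*c+1) = 2*(b+c)+1 by ring, T_odd, h1]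
  rfl

lemma h0_odd {c : ℕ} (h : H1 c) : H0 (2*c+1) := by
  obtain ⟨b, hb, h1⟩ := h
  refine ⟨2*b, Sp_double hb, ?_⟩
  rw [show 2*b+(2*c+1) = 2*(b+c)+1 by ring, T_odd, h1]
  rfl

lemma H10 : H1 0 := ⟨2, Sp2, by simpa using T2⟩
lemma H12 : H1 2 := ⟨2, Sp2, T4⟩
lemma H03 : H0 3 := ⟨2, Sp2, T5⟩

lemma Hall : ∀ c, (c ≠ 1 → H1 c) ∧ (1 ≤ c → H0 c) := by
  intro c
  induction c using Nat.strong_induction_on with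
  | _ c ih =>
    match c with
    | 0 => exact ⟨fun _ => H10, by omega⟩
    | 1 => exact ⟨by omega, fun _ => h0_odd H10⟩
    | 2 => exact ⟨fun _ => H12, fun _ => h0_double (h0_odd H10)⟩
    | 3 => exact ⟨fun _ => h1_odd (h0_odd H10), fun _ => H03⟩
    | (c+4) =>
      rcases Nat.even_or_odd' (c+4) with ⟨c', h' | h'⟩
      · refine ⟨fun _ => ?_, fun _ => ?_⟩
        · rw [h']; exact h1_double ((ih c' (by omega)).1 (by omega))
        · rw [h']; exact h0_double ((ih c' (by omega)).2 (by omega))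
      · refine ⟨fun _ => ?_, fun _ => ?_⟩
        · rw [h']; exact h1_odd ((ih c' (by omega)).2 (by omega))
        · rw [h']; exact h0_odd ((ih c' (by omega)).1 (by omega))

/-- `10` occurs at a pair of positions at distance `d`, for every `d ≠ 1`. -/
lemma Gall : ∀ d, d ≠ 1 → ∃ i, Sp i ∧ Sp (i+d) := by
  intro d hd
  induction d using Nat.strong_induction_on with
  | _ d ih =>
    match d, hd with
    | 0, _ => exact ⟨2, Sp2, Sp2⟩
    | 2, _ => exact ⟨2, Sp2, Sp4⟩
    | 3, _ =>
      obtain ⟨b, hb, h0⟩ := (Hall 1).2 (by omega)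
      refine ⟨4*b+3, Sp_odd hb, ?_⟩
      rw [show 4*b+3+3 = 2*(2*(b+1)+1) by ring]
      refine Sp_of_one ?_
      rw [T_odd, h0]
      rfl
    | (d+4), hd =>
      rcases Nat.even_or_odd' (d+4) with ⟨d', h' | h'⟩
      · obtain ⟨i, hi, hid⟩ := ih d' (by omega) (by omega)
        refine ⟨2*i, Sp_double hi, ?_⟩
        rw [h', show 2*i+2*d' = 2*(i+d') by ring]
        exact Sp_double hid
      · -- d+4 = 2*d'+1 odd, d' ≥ 2
        rcases Nat.even_or_odd' d' with ⟨e, he | he⟩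
        · -- d+4 = 4e+1, e ≥ 1 : use H1 (e+1)
          obtain ⟨b, hb, h1⟩ := (Hall (e+1)).1 (by omega)
          refine ⟨4*b+3, Sp_odd hb, ?_⟩
          rw [show 4*b+3+(d+4) = 2*(2*(b+(e+1))) by omega]
          exact Sp_of_one (by rw [T_double]; exact h1)
        · -- d+4 = 4e+3 : use H0 (e+1)
          obtain ⟨b, hb, h0⟩ := (Hall (e+1)).2 (by omega)
          refine ⟨4*b+3, Sp_odd hb, ?_⟩
          rw [show 4*b+3+(d+4) = 2*(2*(b+(e+1))+1) by omega]
          refine Sp_of_one ?_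
          rw [T_odd, h0]
          rfl

lemma quad {i : ℕ} (h : Sp i) :
    T (2*i) = 1 ∧ T (2*i+1) = 0 ∧ T (2*i+2) = 0 ∧ T (2*i+3) = 1 := by
  refine ⟨by rw [T_double]; exact h.1, by rw [T_odd, h.1]; rfl, ?_, ?_⟩
  · rw [show 2*i+2 = 2*(i+1) by ring, T_double]; exact h.2
  · rw [show 2*i+3 = 2*(i+1)+1 by ring, T_odd, h.2]; rfl

/-- The Thue–Morse word contains a factor of the form `1001⋯ = ⋯1001`
of every positive even length `n ≠ 2, 6`. -/

theorem thueMorse_factor_1001_prefix_suffix (n : ℕ) (hn : 0 < n) (heven : Even n)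
    (h2 : n ≠ 2) (h6 : n ≠ 6) :
    ∃ x : List (Fin 2), FactorTM x ∧ x.length = n ∧
      [1, 0, 0, 1] <+: x ∧ [1, 0, 0, 1] <:+ x := by
  obtain ⟨m, hm⟩ := heven
  obtain ⟨d, hd, hd1⟩ : ∃ d, n = 2*d + 4 ∧ d ≠ 1 := ⟨m - 2, by omega, by omega⟩
  obtain ⟨i, hSi, hSid⟩ := Gall d hd1
  set k := 2*i + 2*d + 4 with hk
  have hub : 2*i + n ≤ 2 ^ k := by
    have := Nat.lt_two_pow_self (n := k)
    omega
  have hlen : (tm k).length = 2 ^ k := length_tm k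
  set x := ((tm k).drop (2*i)).take n with hx
  have hxlen : x.length = n := by
    simp only [hx, List.length_take, List.length_drop, hlen]
    omega
  have hxget : ∀ j, j < n → x.getD j 0 = T (2*i + j) := by
    intro j hj
    have hjx : j < x.length := by omega
    rw [List.getD_eq_getElem _ _ hjx]
    simp only [hx, List.getElem_take, List.getElem_drop]
    rw [← List.getD_eq_getElem _ (0 : Fin 2), ← T_eq (by omega)]
  have hq1 := quad hSi
  have hq2 := quad hSid
  refine ⟨x, ⟨k, ((List.take_prefix _ _).isInfix).trans
      ((List.drop_suffix _ _).isInfix)⟩, hxlen, ?_, ?_⟩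
  · -- prefix
    have h4 : x.take 4 = [1, 0, 0, 1] := by
      apply List.ext_getElem
      · simp [hxlen]; omega
      · intro j hj hj'
        simp only [List.length_take, hxlen] at hj
        have hj4 : j < 4 := by omega
        rw [List.getElem_take, ← List.getD_eq_getElem _ (0 : Fin 2), hxget j (by omega)]
        interval_cases j
        · simpa using hq1.1
        · simpa [show 2*i+1 = 2*i+1 from rfl] using hq1.2.1
        · simpa using hq1.2.2.1
        · simpa using hq1.2.2.2
    exact h4 ▸ List.take_prefix 4 x
  · -- suffix
    have h4 : x.drop (n - 4) = [1, 0, 0, 1] := by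
      apply List.ext_getElem
      · simp [hxlen]; omega
      · intro j hj hj'
        simp only [List.length_drop, hxlen] at hj
        have hj4 : j < 4 := by omega
        rw [List.getElem_drop, ← List.getD_eq_getElem _ (0 : Fin 2),
          hxget (n - 4 + j) (by omega)]
        have he : 2*i + (n - 4 + j) = 2*(i+d) + j := by omega
        rw [he]
        interval_cases j
        · simpa using hq2.1
        · simpa using hq2.2.1
        · simpa using hq2.2.2.1
        · simpa using hq2.2.2.2
    exact h4 ▸ List.drop_suffix (n - 4) x
end

section
/- Let y be an overlap-free word over {0,1}, and let a, b be (possibly empty) words over {0,1} such that the concatenation a·y·b equals zzz for some non-empty word z of length p. Then p ≤ |a| + |b|. -/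
/-- An overlap is a word of the form `c x c x c` with `c` a letter. -/
def IsOverlap {α : Type*} (u : List α) : Prop :=
  ∃ (c : α) (x : List α), u = [c] ++ x ++ [c] ++ x ++ [c]

/-- A word is overlap-free if none of its factors is an overlap. -/
def OverlapFree {α : Type*} (w : List α) : Prop := ∀ u : List α, u <:+: w → ¬ IsOverlap u

/-- If `y` is overlap-free and `a ++ y ++ b` is a cube of period `p`, then `p ≤ |a| + |b|`. -/
theorem period_le_of_overlapFree (y a b z : List (Fin 2))
    (hy : OverlapFree y) (hz : z ≠ []) (h : a ++ y ++ b = z ++ z ++ z) :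
    z.length ≤ a.length + b.length := by
  by_contra h'
  push_neg at h'
  obtain ⟨p, hp⟩ : ∃ p, z.length = p := ⟨z.length, rfl⟩
  rw [hp] at h'
  have hlen : a.length + y.length + b.length = 3 * p := by
    have := congrArg List.length h
    simp [hp] at this
    omega
  have haz : z.take a.length = a := by
    have h1 : (a ++ y ++ b).take a.length = a := by
      rw [List.append_assoc, List.take_append_of_le_length (by omega), List.take_length]
    rw [h] at h1
    rw [List.append_assoc, List.take_append_of_le_length (by omega)] at h1
    exact h1
  set s := z.drop a.length with hs
  have hzas : z = a ++ s := by rw [← haz, hs, List.take_append_drop]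
  have hbz : z.drop (p - b.length) = b := by
    have h1 : (a ++ y ++ b).drop (a.length + y.length) = b := by
      rw [show a ++ y ++ b = (a ++ y) ++ b from rfl]
      rw [show a.length + y.length = (a ++ y).length by simp]
      exact List.drop_left
    rw [h] at h1
    rw [show z ++ z ++ z = (z ++ z) ++ z from rfl] at h1
    rw [show a.length + y.length = (z ++ z).length + (p - b.length) by simp [hp]; omega] at h1
    rw [List.drop_append] at h1
    simpa [List.drop_eq_nil_of_le (show (z ++ z).length ≤ z.length + z.length + (p - b.length) by simp)] using h1
  set t := z.take (p - b.length) with ht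
  have hztb : z = t ++ b := by rw [← hbz, ht, List.take_append_drop]
  have hy2 : y = s ++ z ++ t := by
    have heq : a ++ (y ++ b) = a ++ ((s ++ z ++ t) ++ b) := by
      calc a ++ (y ++ b) = a ++ y ++ b := by simp
        _ = z ++ z ++ z := h
        _ = (a ++ s) ++ z ++ (t ++ b) := by rw [← hzas, ← hztb]
        _ = a ++ ((s ++ z ++ t) ++ b) := by simp
    exact List.append_cancel_right (List.append_cancel_left heq)
  have hslen : s.length = p - a.length := by simp [hs, hp]
  obtain ⟨d, s', hds⟩ : ∃ d s', s = d :: s' := by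
    cases hsc : s with
    | nil => exfalso; rw [hsc] at hslen; simp at hslen; omega
    | cons d s' => exact ⟨d, s', rfl⟩
  have htz : t = a ++ d :: s'.take (p - b.length - a.length - 1) := by
    rw [ht, hzas, hds]
    rw [show p - b.length = a.length + (p - b.length - a.length) by omega]
    rw [List.take_append]
    rw [show p - b.length - a.length = (p - b.length - a.length - 1) + 1 by omega]
    simp [List.take_succ_cons]
  set x := s' ++ a with hx
  have hinfix : ([d] ++ x ++ [d] ++ x ++ [d]) <:+: y := by
    refine ⟨[], s'.take (p - b.length - a.length - 1), ?_⟩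
    rw [hy2, hzas, hds, htz, hx]
    simp
  exact hy _ hinfix ⟨d, x, rfl⟩
end

section
/- Let x be a factor of the Thue–Morse word such that 1001 is both a prefix of x and a suffix of x. Then the word 01010 occurs at exactly one position in the word x·0·x·0, i.e., there is exactly one index i at which 01010 occurs as a factor of x0x0. -/
/-- The word `u` occurs in `w` at position `i`. -/
def OccursAt {α : Type*} (u w : List α) (i : ℕ) : Prop := u <+: w.drop i

open List

lemma fin2_cases (a : Fin 2) : a = 0 ∨ a = 1 := by
  fin_cases a <;> simp

lemma mu_cons_zero (v : List (Fin 2)) : mu (0 :: v) = 0 :: 1 :: mu v := rfl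
lemma mu_cons_one (v : List (Fin 2)) : mu (1 :: v) = 1 :: 0 :: mu v := rfl

lemma not_pre : ∀ v : List (Fin 2), ¬ [0, 0] <+: mu v ∧ ¬ [1, 1] <+: mu v
  | [] => by simp [mu]
  | a :: v => by
    rcases fin2_cases a with rfl | rfl <;>
      simp [mu_cons_zero, mu_cons_one, cons_prefix_cons]

lemma no_ccc : ∀ v : List (Fin 2), ¬ [0, 0, 0] <:+: mu v ∧ ¬ [1, 1, 1] <:+: mu v
  | [] => by simp [mu]
  | a :: v => by
    obtain ⟨ih0, ih1⟩ := no_ccc v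
    obtain ⟨hp0, hp1⟩ := not_pre v
    rcases fin2_cases a with rfl | rfl
    · constructor <;> intro h <;>
        simp only [mu_cons_zero, infix_cons_iff, cons_prefix_cons] at h <;>
        simp_all
    · constructor <;> intro h <;>
        simp only [mu_cons_one, infix_cons_iff, cons_prefix_cons] at h <;>
        simp_all

lemma pre_single : ∀ (c : Fin 2) (v : List (Fin 2)), [c] <+: mu v → [c] <+: v := by
  intro c v h
  match v with
  | [] => simp [mu] at h
  | a :: v =>
    rcases fin2_cases a with rfl | rfl <;>
      simp_all [mu_cons_zero, mu_cons_one, cons_prefix_cons]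

lemma pre_10 : ∀ v : List (Fin 2), [1, 0] <+: mu v → [1] <+: v := by
  intro v h
  match v with
  | [] => simp [mu] at h
  | a :: v =>
    rcases fin2_cases a with rfl | rfl <;>
      simp_all [mu_cons_zero, mu_cons_one, cons_prefix_cons]

lemma pre_010 : ∀ v : List (Fin 2), [0, 1, 0] <+: mu v → [0, 0] <+: v := by
  intro v h
  match v with
  | [] => simp [mu] at h
  | a :: v =>
    rcases fin2_cases a with rfl | rfl
    · simp only [mu_cons_zero, cons_prefix_cons] at h
      obtain ⟨-, -, h⟩ := h
      have := pre_single 0 v h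
      simp_all [cons_prefix_cons]
    · simp [mu_cons_one, cons_prefix_cons] at h

lemma pre_1010 : ∀ v : List (Fin 2), [1, 0, 1, 0] <+: mu v → [1, 1] <+: v := by
  intro v h
  match v with
  | [] => simp [mu] at h
  | a :: v =>
    rcases fin2_cases a with rfl | rfl
    · simp [mu_cons_zero, cons_prefix_cons] at h
    · simp only [mu_cons_one, cons_prefix_cons] at h
      obtain ⟨-, -, h⟩ := h
      have := pre_10 v h
      simp_all [cons_prefix_cons]

lemma infix_01010 : ∀ v : List (Fin 2),
    [0, 1, 0, 1, 0] <:+: mu v → [0, 0, 0] <:+: v ∨ [1, 1, 1] <:+: v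
  | [] => by simp [mu]
  | a :: v => by
    intro h
    rcases fin2_cases a with rfl | rfl
    · simp only [mu_cons_zero, infix_cons_iff, cons_prefix_cons] at h
      rcases h with ⟨-, -, h⟩ | ⟨h, -⟩ | h
      · have h2 := pre_010 v h
        exact Or.inl ((cons_prefix_cons.2 ⟨rfl, h2⟩).isInfix)
      · simp at h
      · rcases infix_01010 v h with h | h
        · exact Or.inl (infix_cons h)
        · exact Or.inr (infix_cons h)
    · simp only [mu_cons_one, infix_cons_iff, cons_prefix_cons] at h
      rcases h with ⟨h, -⟩ | ⟨-, h⟩ | h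
      · simp at h
      · have h2 := pre_1010 v h
        exact Or.inr ((cons_prefix_cons.2 ⟨rfl, h2⟩).isInfix)
      · rcases infix_01010 v h with h | h
        · exact Or.inl (infix_cons h)
        · exact Or.inr (infix_cons h)

lemma notTM : ∀ k : ℕ, ¬ [0, 1, 0, 1, 0] <:+: mu^[k] [0]
  | 0 => by intro h; have := h.length_le; simp at this
  | 1 => by
    intro h; have := h.length_le
    simp [Function.iterate_one, mu] at this
  | (k + 2) => by
    intro h
    rw [Function.iterate_succ_apply', Function.iterate_succ_apply'] at h
    rcases infix_01010 _ h with h | h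
    · exact (no_ccc _).1 h
    · exact (no_ccc _).2 h

/-- `01010` occurs at exactly one position in `x0x0`. -/
theorem occurrence_01010_unique (x : List (Fin 2)) (hx : FactorTM x)
    (hpre : [1, 0, 0, 1] <+: x) (hsuf : [1, 0, 0, 1] <:+ x) :
    ∃! i : ℕ, OccursAt [0, 1, 0, 1, 0] (x ++ [0] ++ x ++ [0]) i := by
  obtain ⟨p, hp⟩ := hpre
  obtain ⟨t, ht⟩ := hsuf
  have hn : x.length = t.length + 4 := by rw [← ht]; simp
  -- any occurrence fully inside `x` contradicts overlap-freeness of TM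
  have hinx : ∀ (j : ℕ) (r : List (Fin 2)), j + 5 ≤ x.length →
      ¬ [0, 1, 0, 1, 0] <+: (x.drop j ++ r) := by
    intro j r hj h
    have h5 : (5 : ℕ) ≤ (x.drop j).length := by
      rw [length_drop]; omega
    have htake : [0, 1, 0, 1, 0] <+: x.drop j := by
      rw [prefix_iff_eq_take] at h ⊢
      simpa [take_append_of_le_length h5] using h
    have hinf : [0, 1, 0, 1, 0] <:+: x :=
      htake.isInfix.trans (x.drop_suffix j).isInfix
    obtain ⟨k, hk⟩ := hx
    exact notTM k (hinf.trans hk)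
  have hw2 : x ++ [0] ++ x ++ [0] = x ++ ([0] ++ x ++ [0]) := by simp
  refine ⟨t.length + 2, ?_, ?_⟩
  · -- existence
    simp only [OccursAt]
    have hw : x ++ [0] ++ x ++ [0] = (t ++ [1, 0]) ++ ([0, 1, 0] ++ x ++ [0]) := by
      rw [← ht]; simp
    have hl : t.length + 2 = (t ++ [1, 0]).length := by simp
    rw [hw, hl, drop_left, ← hp]
    exact ⟨0 :: 1 :: (p ++ [0]), by simp⟩
  · -- uniqueness
    intro i hi
    simp only [OccursAt] at hi
    have hi' : [0, 1, 0, 1, 0] <+: (x ++ [0] ++ x ++ [0]).drop i := hi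
    have hlen := hi'.length_le
    rw [length_drop] at hlen
    have hwlen : (x ++ [0] ++ x ++ [0]).length = 2 * x.length + 2 := by simp; omega
    rw [hwlen] at hlen
    simp only [List.length_cons, List.length_nil] at hlen
    rcases lt_trichotomy i x.length with hA | hB | hC
    · -- i < x.length
      rw [hw2, drop_append] at hi'
      by_cases hA5 : i + 5 ≤ x.length
      · exact absurd hi' (hinx i _ hA5)
      · -- t.length ≤ i < x.length
        have hit : t.length ≤ i := by omega
        have hdx : x.drop i = [(1 : Fin 2), 0, 0, 1].drop (i - t.length) := by
          rw [← ht, drop_append, drop_eq_nil_of_le (by omega), nil_append]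
        have hi0 : i - x.length = 0 := by omega
        rw [hdx, hi0, drop_zero] at hi'
        have hj4 : i - t.length < 4 := by omega
        interval_cases h : (i - t.length)
        · simp [cons_prefix_cons] at hi'
        · simp [cons_prefix_cons] at hi'
        · omega
        · simp [cons_prefix_cons] at hi'
    · -- i = x.length : window starts with the separator 0 then x = 1001...
      subst hB
      rw [hw2, drop_append, drop_eq_nil_of_le le_rfl,
        Nat.sub_self, drop_zero, nil_append, ← hp] at hi'
      simp [cons_prefix_cons] at hi'
    · -- i > x.length
      have hw3 : x ++ [0] ++ x ++ [0] = (x ++ [0]) ++ (x ++ [0]) := by simp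
      have hxl : (x ++ [0]).length = x.length + 1 := by simp
      rw [hw3, drop_append, drop_eq_nil_of_le (by omega), nil_append,
        hxl] at hi'
      set m := i - (x.length + 1) with hm
      rw [drop_append] at hi'
      by_cases hm5 : m + 5 ≤ x.length
      · exact absurd hi' (hinx m _ hm5)
      · -- m = x.length - 4 forced
        have hmt : m = t.length := by omega
        have hdx : x.drop m = [(1 : Fin 2), 0, 0, 1] := by
          rw [hmt, ← ht, drop_append, drop_eq_nil_of_le le_rfl,
            Nat.sub_self, drop_zero, nil_append]
        have hm0 : m - x.length = 0 := by omega
        rw [hdx, hm0, drop_zero] at hi'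
        simp [cons_prefix_cons] at hi'
end

section
/- Let x be a factor of the Thue–Morse word such that 1001 is both a prefix of x and a suffix of x. Then the word 00100 occurs at exactly one position in the word x·101100·x·101100. -/
lemma prefix_of_prefix_append {α : Type*} {u a b : List α} (h : u <+: a ++ b)
    (hl : u.length ≤ a.length) : u <+: a := by
  rw [List.prefix_iff_eq_take] at h
  rw [List.take_append, Nat.sub_eq_zero_of_le hl] at h
  simp at h
  rw [h]
  exact List.take_prefix _ _

lemma drop_append_left {α : Type*} (a b : List α) (i : ℕ) (h : a.length ≤ i) :
    (a ++ b).drop i = b.drop (i - a.length) := by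
  rw [List.drop_append, List.drop_eq_nil_of_le h, List.nil_append]

lemma drop_append_right {α : Type*} (a b : List α) (i : ℕ) (h : i ≤ a.length) :
    (a ++ b).drop i = a.drop i ++ b := by
  rw [List.drop_append, Nat.sub_eq_zero_of_le h, List.drop_zero]

lemma mu_ne (w : List (Fin 2)) (j : ℕ) (c d : Fin 2)
    (h1 : (mu w)[2*j]? = some c) (h2 : (mu w)[2*j+1]? = some d) : c ≠ d := by
  induction w generalizing j with
  | nil => simp [mu] at h1
  | cons a w ih =>
    obtain ⟨b0, b1, hne, hb⟩ : ∃ b0 b1 : Fin 2, b0 ≠ b1 ∧ mu (a :: w) = b0 :: b1 :: mu w := by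
      rcases (show a = 0 ∨ a = 1 by omega) with ha | ha <;> subst ha
      · exact ⟨0, 1, by decide, rfl⟩
      · exact ⟨1, 0, by decide, rfl⟩
    rw [hb] at h1 h2
    cases j with
    | zero =>
      simp at h1 h2
      rw [← h1, ← h2]
      exact hne
    | succ j =>
      rw [show 2*(j+1) = (2*j)+1+1 by ring] at h1
      rw [show 2*(j+1)+1 = (2*j+1)+1+1 by ring] at h2
      simp only [List.getElem?_cons_succ] at h1 h2
      exact ih j h1 h2

lemma not_infix_tm (k : ℕ) : ¬ ([0,0,1,0,0] : List (Fin 2)) <:+: mu^[k] [0] := by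
  intro h
  obtain ⟨s, t, hst⟩ := h
  cases k with
  | zero =>
    have := congrArg List.length hst
    simp at this; omega
  | succ k =>
    rw [Function.iterate_succ_apply'] at hst
    set w := mu^[k] [0] with hw
    have key : ∀ j, j < 5 → (mu w)[s.length + j]? = ([0,0,1,0,0] : List (Fin 2))[j]? := by
      intro j hj
      rw [← hst, List.append_assoc, List.getElem?_append_right (Nat.le_add_right _ _),
        Nat.add_sub_cancel_left, List.getElem?_append]
      simp [hj]
    rcases Nat.even_or_odd s.length with ⟨m, hm⟩ | ⟨m, hm⟩
    · have a1 := key 0 (by norm_num)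
      have a2 := key 1 (by norm_num)
      rw [show s.length + 0 = 2*m by omega] at a1
      rw [show s.length + 1 = 2*m+1 by omega] at a2
      exact mu_ne w m 0 0 (by simpa using a1) (by simpa using a2) rfl
    · have a1 := key 3 (by norm_num)
      have a2 := key 4 (by norm_num)
      rw [show s.length + 3 = 2*(m+2) by omega] at a1
      rw [show s.length + 4 = 2*(m+2)+1 by omega] at a2
      exact mu_ne w (m+2) 0 0 (by simpa using a1) (by simpa using a2) rfl

/-- `00100` occurs at exactly one position in `x101100x101100`. -/
theorem occurrence_00100_unique (x : List (Fin 2)) (hx : FactorTM x)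
    (hpre : [1, 0, 0, 1] <+: x) (hsuf : [1, 0, 0, 1] <:+ x) :
    ∃! i : ℕ, OccursAt [0, 0, 1, 0, 0]
      (x ++ [1, 0, 1, 1, 0, 0] ++ x ++ [1, 0, 1, 1, 0, 0]) i := by
  obtain ⟨s, hs⟩ := hsuf
  obtain ⟨r, hr⟩ := hpre
  have hL : x.length = s.length + 4 := by rw [← hs]; simp
  have notx : ¬ ([0,0,1,0,0] : List (Fin 2)) <:+: x := by
    intro h
    obtain ⟨k, hk⟩ := hx
    exact not_infix_tm k (h.trans hk)
  have hw2 : x ++ [1,0,1,1,0,0] ++ x ++ [1,0,1,1,0,0]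
      = s ++ ([1,0,0,1,1,0,1,1,0,0,1,0,0,1] ++ (r ++ [1,0,1,1,0,0])) := by
    nth_rewrite 2 [← hr]
    nth_rewrite 1 [← hs]
    simp
  have hw4 : x ++ [1,0,1,1,0,0] ++ x ++ [1,0,1,1,0,0]
      = (x ++ ([1,0,1,1,0,0] ++ s)) ++ ([1,0,0,1,1,0,1,1,0,0]) := by
    nth_rewrite 2 [← hs]
    simp
  refine ⟨s.length + 8, ?_, ?_⟩
  · show _ <+: _
    rw [hw2, drop_append_left _ _ _ (by omega), show s.length + 8 - s.length = 8 by omega]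
    exact ⟨[1] ++ (r ++ [1,0,1,1,0,0]), by simp⟩
  · intro i hi
    have hocc : [0,0,1,0,0] <+: (x ++ [1,0,1,1,0,0] ++ x ++ [1,0,1,1,0,0]).drop i := hi
    rcases (show i + 5 ≤ x.length ∨ (s.length ≤ i ∧ i ≤ s.length + 9)
        ∨ (x.length + 6 ≤ i ∧ i + 5 ≤ 2*x.length + 6) ∨ 2*x.length + 2 ≤ i by omega) with
      h1 | ⟨h2a, h2b⟩ | ⟨h3a, h3b⟩ | h4
    · exfalso
      rw [show x ++ [1,0,1,1,0,0] ++ x ++ [1,0,1,1,0,0]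
            = x ++ ([1,0,1,1,0,0] ++ (x ++ [1,0,1,1,0,0])) by simp,
        drop_append_right x _ _ (by omega)] at hocc
      have hpx : [0,0,1,0,0] <+: x.drop i :=
        prefix_of_prefix_append hocc (by simp; omega)
      exact notx (hpx.isInfix.trans (List.drop_suffix i x).isInfix)
    · obtain ⟨j, rfl, hj9⟩ : ∃ j, i = s.length + j ∧ j ≤ 9 :=
        ⟨i - s.length, by omega, by omega⟩
      rw [hw2, drop_append_left _ _ _ (by omega),
        show s.length + j - s.length = j by omega,
        drop_append_right _ _ _ (by simp; omega)] at hocc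
      have hpD : [0,0,1,0,0] <+:
          ([1,0,0,1,1,0,1,1,0,0,1,0,0,1] : List (Fin 2)).drop j :=
        prefix_of_prefix_append hocc (by simp; omega)
      interval_cases j
      · exact absurd hpD (by decide)
      · exact absurd hpD (by decide)
      · exact absurd hpD (by decide)
      · exact absurd hpD (by decide)
      · exact absurd hpD (by decide)
      · exact absurd hpD (by decide)
      · exact absurd hpD (by decide)
      · exact absurd hpD (by decide)
      · rfl
      · exact absurd hpD (by decide)
    · exfalso
      rw [show x ++ [1,0,1,1,0,0] ++ x ++ [1,0,1,1,0,0]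
            = (x ++ [1,0,1,1,0,0]) ++ (x ++ [1,0,1,1,0,0]) by simp,
        drop_append_left _ _ _ (by simp; omega),
        drop_append_right x _ _ (by simp; omega)] at hocc
      have hpx : [0,0,1,0,0] <+: x.drop (i - (x ++ [1,0,1,1,0,0]).length) :=
        prefix_of_prefix_append hocc (by simp; omega)
      exact notx (hpx.isInfix.trans (List.drop_suffix _ x).isInfix)
    · exfalso
      rw [hw4, drop_append_left _ _ _ (by simp; omega)] at hocc
      obtain ⟨j, hj, hj'⟩ : ∃ j, i - (x ++ ([1,0,1,1,0,0] ++ s)).length = j ∧ True :=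
        ⟨_, rfl, trivial⟩
      rw [hj] at hocc
      have hj5 : j ≤ 5 := by
        have := hocc.length_le
        simp at this
        omega
      interval_cases j
      · exact absurd hocc (by decide)
      · exact absurd hocc (by decide)
      · exact absurd hocc (by decide)
      · exact absurd hocc (by decide)
      · exact absurd hocc (by decide)
      · exact absurd hocc (by decide)
end

section
/- Let x be a factor of the Thue–Morse word such that 1001 is both a prefix of x and a suffix of x. Then the word 11011 occurs at exactly two positions in the word x·101100·x·101100. -/
/-- Words that are concatenations of the blocks `01` and `10`. -/
inductive Blocks : List (Fin 2) → Prop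
  | nil : Blocks []
  | b01 (w : List (Fin 2)) : Blocks w → Blocks (0 :: 1 :: w)
  | b10 (w : List (Fin 2)) : Blocks w → Blocks (1 :: 0 :: w)

lemma blocks_mu : ∀ w : List (Fin 2), Blocks (mu w) := by
  intro w
  induction w with
  | nil => exact Blocks.nil
  | cons c w ih =>
    fin_cases c
    · simpa [mu] using Blocks.b01 _ ih
    · simpa [mu] using Blocks.b10 _ ih

lemma blocks_not_pre11 {w : List (Fin 2)} (hw : Blocks w) :
    ¬ ([1, 1] : List (Fin 2)) <+: w := by
  rintro ⟨t, ht⟩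
  cases hw with
  | nil => simp at ht
  | b01 w' _ => simp at ht
  | b10 w' _ => simp at ht

lemma blocks_not_pre1011 {w : List (Fin 2)} (hw : Blocks w) :
    ¬ ([1, 0, 1, 1] : List (Fin 2)) <+: w := by
  rintro ⟨t, ht⟩
  cases hw with
  | nil => simp at ht
  | b01 w' _ => simp at ht
  | b10 w' hw' =>
    have : w' = 1 :: 1 :: t := by symm; simpa using ht
    exact blocks_not_pre11 hw' ⟨t, by simp [this]⟩

lemma blocks_noT {w : List (Fin 2)} (hw : Blocks w) :
    ¬ ([1, 1, 0, 1, 1] : List (Fin 2)) <:+: w := by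
  induction hw with
  | nil => intro h; simpa using h.length_le
  | b01 w' hw' ih =>
    intro h
    rcases List.infix_cons_iff.mp h with hp | h
    · obtain ⟨t, ht⟩ := hp; simp at ht
    rcases List.infix_cons_iff.mp h with hp | h
    · obtain ⟨t, ht⟩ := hp
      have : w' = 1 :: 0 :: 1 :: 1 :: t := by symm; simpa using ht
      exact blocks_not_pre1011 hw' ⟨t, by simp [this]⟩
    · exact ih h
  | b10 w' hw' ih =>
    intro h
    rcases List.infix_cons_iff.mp h with hp | h
    · obtain ⟨t, ht⟩ := hp; simp at ht
    rcases List.infix_cons_iff.mp h with hp | h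
    · obtain ⟨t, ht⟩ := hp; simp at ht
    · exact ih h

lemma noT_tm (K : ℕ) : ¬ ([1, 1, 0, 1, 1] : List (Fin 2)) <:+: mu^[K] [0] := by
  cases K with
  | zero => intro h; simpa using h.length_le
  | succ K =>
    rw [Function.iterate_succ_apply']
    exact blocks_noT (blocks_mu _)

lemma occ_helper (b r : List (Fin 2))
    (hb : ¬ ([1, 1, 0, 1, 1] : List (Fin 2)) <:+: (b ++ [1, 0, 0, 1]))
    (k : ℕ)
    (h : ([1, 1, 0, 1, 1] : List (Fin 2)) =
      List.take 5 (List.drop k ((b ++ [1, 0, 0, 1] ++ [1, 0, 1, 1, 0, 0]) ++ r))) :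
    k = b.length + 3 ∨ b.length + 10 ≤ k := by
  rcases Nat.lt_or_ge k b.length with hk | hk
  · exfalso
    apply hb
    have e : List.drop k ((b ++ [1, 0, 0, 1] ++ [1, 0, 1, 1, 0, 0]) ++ r)
        = (b ++ [1, 0, 0, 1]).drop k ++ ([1, 0, 1, 1, 0, 0] ++ r) := by
      rw [List.append_assoc (b ++ [1, 0, 0, 1])]
      exact List.drop_append_of_le_length (by simp; omega)
    have hx5 : 5 ≤ ((b ++ [1, 0, 0, 1] : List (Fin 2)).drop k).length := by
      simp; omega
    rw [e, List.take_append_of_le_length hx5] at h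
    have hpre : ([1, 1, 0, 1, 1] : List (Fin 2)) <+: (b ++ [1, 0, 0, 1]).drop k :=
      h ▸ List.take_prefix 5 _
    exact hpre.isInfix.trans (List.drop_suffix k _).isInfix
  · obtain ⟨d, rfl⟩ : ∃ d, k = b.length + d := ⟨k - b.length, by omega⟩
    rcases Nat.lt_or_ge d 10 with hd | hd
    · have e : List.drop (b.length + d) ((b ++ [1, 0, 0, 1] ++ [1, 0, 1, 1, 0, 0]) ++ r)
          = List.drop d ([1, 0, 0, 1, 1, 0, 1, 1, 0, 0] ++ r) := by
        rw [show (b ++ [1, 0, 0, 1] ++ [1, 0, 1, 1, 0, 0]) ++ r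
            = b ++ ([1, 0, 0, 1, 1, 0, 1, 1, 0, 0] ++ r) from by simp]
        exact List.drop_length_add_append d
      rw [e] at h
      interval_cases d
      · simp at h
      · simp at h
      · simp at h
      · exact Or.inl rfl
      · simp at h
      · simp at h
      · simp at h
      · simp at h
      · simp at h
      · simp at h
    · exact Or.inr (by omega)

/-- `11011` occurs at exactly two positions in `x101100x101100`. -/
theorem occurrence_11011_exactly_two (x : List (Fin 2)) (hx : FactorTM x)
    (hpre : [1, 0, 0, 1] <+: x) (hsuf : [1, 0, 0, 1] <:+ x) :
    ∃ i j : ℕ, i ≠ j ∧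
      OccursAt [1, 1, 0, 1, 1] (x ++ [1, 0, 1, 1, 0, 0] ++ x ++ [1, 0, 1, 1, 0, 0]) i ∧
      OccursAt [1, 1, 0, 1, 1] (x ++ [1, 0, 1, 1, 0, 0] ++ x ++ [1, 0, 1, 1, 0, 0]) j ∧
      ∀ k : ℕ, OccursAt [1, 1, 0, 1, 1] (x ++ [1, 0, 1, 1, 0, 0] ++ x ++ [1, 0, 1, 1, 0, 0]) k →
        k = i ∨ k = j := by
  obtain ⟨K, hxK⟩ := hx
  obtain ⟨b, rfl⟩ := hsuf
  have hT : ¬ ([1, 1, 0, 1, 1] : List (Fin 2)) <:+: (b ++ [1, 0, 0, 1]) :=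
    fun h => noT_tm K (h.trans hxK)
  refine ⟨b.length + 3, 2 * b.length + 13, by omega, ?_, ?_, ?_⟩
  · show ([1, 1, 0, 1, 1] : List (Fin 2)) <+: _
    have e : (b ++ [1, 0, 0, 1]) ++ [1, 0, 1, 1, 0, 0] ++ (b ++ [1, 0, 0, 1]) ++ [1, 0, 1, 1, 0, 0]
        = b ++ ([1, 0, 0, 1, 1, 0, 1, 1, 0, 0] ++ ((b ++ [1, 0, 0, 1]) ++ [1, 0, 1, 1, 0, 0])) := by
      simp
    rw [show b.length + 3 = b.length + 3 from rfl, e, List.drop_append]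
    exact ⟨[0, 0] ++ ((b ++ [1, 0, 0, 1]) ++ [1, 0, 1, 1, 0, 0]), by simp⟩
  · show ([1, 1, 0, 1, 1] : List (Fin 2)) <+: _
    have e : (b ++ [1, 0, 0, 1]) ++ [1, 0, 1, 1, 0, 0] ++ (b ++ [1, 0, 0, 1]) ++ [1, 0, 1, 1, 0, 0]
        = (b ++ [1, 0, 0, 1] ++ [1, 0, 1, 1, 0, 0]) ++ (b ++ ([1, 0, 0, 1, 1, 0, 1, 1, 0, 0])) := by
      simp
    rw [e, show 2 * b.length + 13
        = (b ++ [1, 0, 0, 1] ++ [1, 0, 1, 1, 0, 0]).length + (b.length + 3) from by simp; omega,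
      List.drop_length_add_append, List.drop_append]
    exact ⟨[0, 0], by simp⟩
  · intro k hk
    have h5 : ([1, 1, 0, 1, 1] : List (Fin 2)) =
        List.take 5 (List.drop k ((b ++ [1, 0, 0, 1]) ++ [1, 0, 1, 1, 0, 0] ++ (b ++ [1, 0, 0, 1]) ++ [1, 0, 1, 1, 0, 0])) := by
      simpa using List.prefix_iff_eq_take.mp hk
    have e : (b ++ [1, 0, 0, 1]) ++ [1, 0, 1, 1, 0, 0] ++ (b ++ [1, 0, 0, 1]) ++ [1, 0, 1, 1, 0, 0]
        = (b ++ [1, 0, 0, 1] ++ [1, 0, 1, 1, 0, 0]) ++ ((b ++ [1, 0, 0, 1] ++ [1, 0, 1, 1, 0, 0]) ++ []) := by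
      simp
    rw [e] at h5
    rcases occ_helper b _ hT k h5 with h | h
    · exact Or.inl h
    · obtain ⟨d, rfl⟩ : ∃ d, k = (b ++ [1, 0, 0, 1] ++ [1, 0, 1, 1, 0, 0]).length + d :=
        ⟨k - (b.length + 10), by simp; omega⟩
      rw [List.drop_length_add_append] at h5
      rcases occ_helper b [] hT d h5 with h' | h'
      · right; simp; omega
      · exfalso
        rw [List.drop_eq_nil_of_le (by simp; omega)] at h5
        simp at h5
end

section
/- There exist an infinite word w over the alphabet {0,1}, a real constant C > 0, and a real constant c > 1 such that w is cubefree and, for every positive integer n, the number of distinct factors of w of length n is at least C·c^n. -/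
/-- `u` is a factor of the infinite word `w`, i.e. `u` occurs as a contiguous block in `w`. -/
def FactorI {α : Type*} (u : List α) (w : ℕ → α) : Prop :=
  ∃ i : ℕ, u = (List.range u.length).map fun k => w (i + k)

/-- An infinite word is cubefree if none of its finite factors is a cube. -/
def CubefreeI {α : Type*} (w : ℕ → α) : Prop := ∀ u : List α, FactorI u w → ¬ IsCube u

namespace CFW

/-! ### The Thue–Morse sequence and its cubefreeness -/

def tm (n : ℕ) : Bool := decide ((Nat.digits 2 n).sum % 2 = 1)

lemma tm_even (n : ℕ) : tm (2*n) = tm n := by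
  rcases Nat.eq_zero_or_pos n with h | h
  · simp [h]
  · unfold tm
    rw [Nat.digits_def' (by norm_num : 1 < 2) (by omega : 0 < 2*n)]
    have h1 : 2*n % 2 = 0 := by omega
    have h2 : 2*n/2 = n := by omega
    rw [h1, h2, List.sum_cons]
    simp

lemma tm_odd (n : ℕ) : tm (2*n+1) = !tm n := by
  unfold tm
  rw [Nat.digits_def' (by norm_num : 1 < 2) (by omega : 0 < 2*n+1)]
  have h1 : (2*n+1) % 2 = 1 := by omega
  have h2 : (2*n+1)/2 = n := by omega
  rw [h1, h2, List.sum_cons]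
  rcases Nat.mod_two_eq_zero_or_one ((Nat.digits 2 n).sum) with h | h <;>
    simp [Nat.add_mod, h]

lemma tm_no_aaa (i : ℕ) : ¬ (tm i = tm (i+1) ∧ tm (i+1) = tm (i+2)) := by
  rintro ⟨h1, h2⟩
  rcases Nat.even_or_odd i with ⟨m, hm⟩ | ⟨m, hm⟩
  · have e1 : i = 2*m := by omega
    rw [e1, tm_even, tm_odd] at h1
    simp at h1
  · have e1 : i + 1 = 2*(m+1) := by omega
    have e2 : i + 2 = 2*(m+1)+1 := by omega
    rw [e1, e2, tm_even, tm_odd] at h2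
    simp at h2

lemma tm_cubefree : ∀ k, 0 < k → ∀ i, ¬ (∀ j < 2*k, tm (i+j) = tm (i+j+k)) := by
  intro k
  induction k using Nat.strong_induction_on with
  | _ k IH =>
    intro hk i H
    rcases Nat.lt_or_ge k 2 with hk2 | hk2
    · -- k = 1
      have e : k = 1 := by omega
      subst e
      apply tm_no_aaa i
      refine ⟨?_, ?_⟩
      · have := H 0 (by omega); simpa using this
      · have := H 1 (by omega); simpa using this
    rcases Nat.even_or_odd k with ⟨k', hk'⟩ | ⟨h, hh⟩
    · -- even case
      have hkk : k = 2*k' := by omega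
      apply IH k' (by omega) (by omega) ((i+1)/2)
      intro j' hj'
      set i' := (i+1)/2 with hi'
      have hj : 2*(i'+j') - i < 2*k := by omega
      have key := H (2*(i'+j') - i) hj
      have e1 : i + (2*(i'+j') - i) = 2*(i'+j') := by omega
      have e2 : i + (2*(i'+j') - i) + k = 2*(i'+j'+k') := by omega
      rw [e2, e1, tm_even, tm_even] at key
      exact key
    · -- odd case, k = 2h+1 with h ≥ 1
      have hh1 : 1 ≤ h := by omega
      have claim : ∀ m, i ≤ 2*m → 2*m+1 < i + 2*k → tm (m+h) = tm (m+h+1) := by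
        intro m hm1 hm2
        have H1 := H (2*m - i) (by omega)
        have H2 := H (2*m+1 - i) (by omega)
        have e1 : i + (2*m - i) = 2*m := by omega
        have e2 : i + (2*m - i) + k = 2*(m+h)+1 := by omega
        have e3 : i + (2*m+1 - i) = 2*m+1 := by omega
        have e4 : i + (2*m+1 - i) + k = 2*(m+h+1) := by omega
        rw [e2, e1, tm_odd, tm_even] at H1
        rw [e4, e3, tm_even, tm_odd] at H2
        -- H1 : tm m = !tm (m+h); H2 : !tm m = tm (m+h+1)
        rw [H1] at H2
        simpa using H2
      set m₀ := (i+1)/2 with hm0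
      have c1 := claim m₀ (by omega) (by omega)
      have c2 := claim (m₀+1) (by omega) (by omega)
      have e1 : m₀+1+h = m₀+h+1 := by omega
      rw [e1] at c2
      have e2 : m₀+h+1+1 = m₀+h+2 := by omega
      rw [e2] at c2
      exact tm_no_aaa (m₀+h) ⟨c1, c2⟩

/-! ### A universal binary word (containing every finite binary word) -/

def enc (k : ℕ) : List (Fin 2) := ((Encodable.decode (α := List (Fin 2)) k).getD []) ++ [0]

def FF (N : ℕ) : List (Fin 2) := ((List.range N).map enc).flatten

def xw (n : ℕ) : Fin 2 := (FF (n+1)).getD n 0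

lemma FF_succ (N : ℕ) : FF (N+1) = FF N ++ enc N := by
  unfold FF
  rw [List.range_succ, List.map_append, List.flatten_append]
  simp

lemma FF_length (N : ℕ) : N ≤ (FF N).length := by
  induction N with
  | zero => simp [FF]
  | succ n ih =>
    rw [FF_succ, List.length_append]
    have : 1 ≤ (enc n).length := by simp [enc]
    omega

lemma FF_prefix {a b : ℕ} (h : a ≤ b) : FF a <+: FF b := by
  induction b with
  | zero => simp_all
  | succ n ih =>
    rcases Nat.lt_or_ge a (n+1) with h' | h'
    · exact (ih (by omega)).trans (by rw [FF_succ]; exact List.prefix_append _ _)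
    · have : a = n+1 := by omega
      subst this
      exact List.prefix_refl _

lemma getD_prefix {l l' : List (Fin 2)} (h : l <+: l') {n : ℕ} (hn : n < l.length) :
    l'.getD n 0 = l.getD n 0 := by
  obtain ⟨t, rfl⟩ := h
  exact List.getD_append _ _ _ _ hn

lemma xw_eq (N n : ℕ) (h : n < (FF N).length) : xw n = (FF N).getD n 0 := by
  unfold xw
  rcases Nat.le_total (n+1) N with h' | h'
  · exact (getD_prefix (FF_prefix h') (lt_of_lt_of_le (by omega) (FF_length (n+1)))).symm
  · exact getD_prefix (FF_prefix h') h

lemma xw_univ (v : List (Fin 2)) : ∃ i, ∀ j < v.length, xw (i + j) = v.getD j 0 := by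
  set k := Encodable.encode v with hk
  have hvk : enc k = v ++ [0] := by
    unfold enc
    rw [hk, Encodable.encodek]
    rfl
  refine ⟨(FF k).length, ?_⟩
  intro j hj
  have henc : (enc k).length = v.length + 1 := by rw [hvk]; simp
  have hlen : (FF (k+1)).length = (FF k).length + v.length + 1 := by
    rw [FF_succ, List.length_append, henc]
    omega
  rw [xw_eq (k+1) _ (by omega)]
  rw [FF_succ, List.getD_append_right _ _ _ _ (by omega)]
  have e : (FF k).length + j - (FF k).length = j := by omega
  rw [e, hvk, List.getD_append _ _ _ _ (by omega)]

/-! ### The word itself -/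

def pat : ℕ → Fin 2 := fun r => [0,1,0,1,1,0,0,1,0,0,1,0,1,0].getD r 0

def W (n : ℕ) : Fin 2 :=
  if n % 14 = 13 then (if tm (n/14) then 1 else 0)
  else if n % 14 = 6 then xw (n/14)
  else pat (n % 14)

lemma W_t (q : ℕ) : W (14*q + 13) = (if tm q then 1 else 0) := by
  unfold W
  have h1 : (14*q+13) % 14 = 13 := by omega
  have h2 : (14*q+13)/14 = q := by omega
  rw [h1, h2]
  simp

lemma W_x (q : ℕ) : W (14*q + 6) = xw q := by
  unfold W
  have h1 : (14*q+6) % 14 = 6 := by omega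
  have h2 : (14*q+6)/14 = q := by omega
  rw [h1, h2]
  simp

lemma W_pat (n : ℕ) (h6 : n % 14 ≠ 6) (h13 : n % 14 ≠ 13) : W n = pat (n % 14) := by
  unfold W
  rw [if_neg h13, if_neg h6]

lemma W_pat' (M r : ℕ) (hr : M % 14 = r) (h6 : r ≠ 6) (h13 : r ≠ 13) : W M = pat r := by
  subst hr
  exact W_pat M h6 h13

def MyInner (ρ i' : ℕ) : Prop := ρ = 0 ∨ ∃ n < i' + ρ, i' ≤ n ∧
    ∃ j₁ < 3, ∃ j₂ < 3, j₁ < j₂ ∧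
      (n + j₁*ρ) % 14 ≠ 6 ∧ (n + j₁*ρ) % 14 ≠ 13 ∧
      (n + j₂*ρ) % 14 ≠ 6 ∧ (n + j₂*ρ) % 14 ≠ 13 ∧
      pat ((n + j₁*ρ) % 14) ≠ pat ((n + j₂*ρ) % 14)

instance (ρ i' : ℕ) : Decidable (MyInner ρ i') := by unfold MyInner; infer_instance

set_option maxRecDepth 100000 in
lemma patCheck : ∀ ρ < 14, ∀ i' < 14, MyInner ρ i' := by decide

/-! ### No periodicity: the word is cubefree -/

lemma no_period (i p : ℕ) (hp : 0 < p) (H : ∀ j < 2*p, W (i+j) = W (i+j+p)) : False := by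
  by_cases hdvd : 14 ∣ p
  · obtain ⟨k, rfl⟩ := hdvd
    have hk : 0 < k := by omega
    apply tm_cubefree k hk (i/14)
    intro j hj
    have hj' : 14*(i/14+j) + 13 - i < 2*(14*k) := by omega
    have key := H (14*(i/14+j) + 13 - i) hj'
    have e1 : i + (14*(i/14+j) + 13 - i) = 14*(i/14+j)+13 := by omega
    have e2 : i + (14*(i/14+j) + 13 - i) + 14*k = 14*(i/14+j+k)+13 := by omega
    rw [e2, e1, W_t, W_t] at key
    by_cases ha : tm (i/14+j) <;> by_cases hb : tm (i/14+j+k)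
    · rw [ha, hb]
    · rw [if_pos ha, if_neg hb] at key; exact absurd key (by decide)
    · rw [if_neg ha, if_pos hb] at key; exact absurd key (by decide)
    · simp only [Bool.not_eq_true] at ha hb
      rw [ha, hb]
  · have hρ1 : 0 < p % 14 := Nat.pos_of_ne_zero (fun h => hdvd (Nat.dvd_of_mod_eq_zero h))
    have hI : MyInner (p % 14) (i % 14) :=
      patCheck (p % 14) (Nat.mod_lt _ (by norm_num)) (i % 14) (Nat.mod_lt _ (by norm_num))
    unfold MyInner at hI
    obtain ⟨n, hn1, hn2, j₁, hj₁, j₂, hj₂, hlt, h16, h113, h26, h213, hne⟩ :=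
      hI.resolve_left (by omega)
    set N := i + (n - i % 14) with hN
    have E0 : W N = W (N + p) := by
      have key := H (N - i) (by omega)
      have e1 : i + (N - i) = N := by omega
      rw [e1] at key
      exact key
    have E1 : W (N + p) = W (N + 2*p) := by
      have key := H (N + p - i) (by omega)
      have e2 : i + (N + p - i) + p = N + 2*p := by omega
      have e1 : i + (N + p - i) = N + p := by omega
      rw [e2, e1] at key
      exact key
    interval_cases j₁ <;> interval_cases j₂ <;> try omega
    · -- j₁ = 0, j₂ = 1
      have q1 := W_pat' N _ (by omega) h16 h113
      have q2 := W_pat' (N + p) _ (by omega) h26 h213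
      exact hne (by rw [← q1, ← q2]; exact E0)
    · -- j₁ = 0, j₂ = 2
      have q1 := W_pat' N _ (by omega) h16 h113
      have q2 := W_pat' (N + 2*p) _ (by omega) h26 h213
      exact hne (by rw [← q1, ← q2]; exact E0.trans E1)
    · -- j₁ = 1, j₂ = 2
      have q1 := W_pat' (N + p) _ (by omega) h16 h113
      have q2 := W_pat' (N + 2*p) _ (by omega) h26 h213
      exact hne (by rw [← q1, ← q2]; exact E1)

lemma W_cubefree : CubefreeI W := by
  intro u hu hc
  obtain ⟨z, hz, huz⟩ := hc
  obtain ⟨i, hF⟩ := hu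
  set p := z.length with hp
  have hp0 : 0 < p := List.length_pos_iff.mpr hz
  have hlen : u.length = 3*p := by rw [huz]; simp only [List.length_append]; omega
  have hgd : ∀ m, m < 3*p → u.getD m 0 = W (i + m) := by
    intro m hm
    conv_lhs => rw [hF]
    rw [List.getD_eq_getElem _ _ (by simpa using (by omega : m < u.length))]
    simp
  have hshift : ∀ m, m < 2*p → u.getD m 0 = u.getD (m+p) 0 := by
    intro m hm
    rw [huz]
    rcases Nat.lt_or_ge m p with h | h
    · have a1 : ((z ++ z) ++ z).getD m 0 = (z ++ z).getD m 0 :=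
        List.getD_append _ _ _ _ (by rw [List.length_append]; omega)
      have a2 : (z ++ z).getD m 0 = z.getD m 0 :=
        List.getD_append _ _ _ _ (by omega)
      have b1 : ((z ++ z) ++ z).getD (m+p) 0 = (z ++ z).getD (m+p) 0 :=
        List.getD_append _ _ _ _ (by rw [List.length_append]; omega)
      have b2 : (z ++ z).getD (m+p) 0 = z.getD (m+p - z.length) 0 :=
        List.getD_append_right _ _ _ _ (by omega)
      have e : m + p - z.length = m := by omega
      rw [a1, a2, b1, b2, e]
    · have a1 : ((z ++ z) ++ z).getD m 0 = (z ++ z).getD m 0 :=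
        List.getD_append _ _ _ _ (by rw [List.length_append]; omega)
      have a2 : (z ++ z).getD m 0 = z.getD (m - z.length) 0 :=
        List.getD_append_right _ _ _ _ (by omega)
      have b1 : ((z ++ z) ++ z).getD (m+p) 0 = z.getD (m + p - ((z++z)).length) 0 :=
        List.getD_append_right _ _ _ _ (by rw [List.length_append]; omega)
      have e : m + p - ((z++z)).length = m - z.length := by rw [List.length_append]; omega
      rw [a1, a2, b1, e]
  apply no_period i p hp0
  intro j hj
  have h1 := hgd j (by omega)
  have h2 := hgd (j + p) (by omega)
  have h3 := hshift j hj
  rw [h1, h2] at h3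
  have e : i + (j + p) = i + j + p := by omega
  rw [e] at h3
  exact h3

/-! ### Exponentially many factors -/

noncomputable def occ (v : List (Fin 2)) : ℕ := (xw_univ v).choose

lemma occ_spec (v : List (Fin 2)) : ∀ j < v.length, xw (occ v + j) = v.getD j 0 :=
  (xw_univ v).choose_spec

noncomputable def Fac (n : ℕ) (v : List (Fin 2)) : List (Fin 2) :=
  (List.range n).map fun k => W (14 * occ v + k)

lemma Fac_length (n : ℕ) (v : List (Fin 2)) : (Fac n v).length = n := by simp [Fac]

lemma Fac_factor (n : ℕ) (v : List (Fin 2)) : FactorI (Fac n v) W := by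
  refine ⟨14 * occ v, ?_⟩
  rw [Fac_length]
  rfl

lemma Fac_decode (n : ℕ) (v : List (Fin 2)) (j : ℕ) (hj : j < v.length) (hjn : 14*j + 6 < n) :
    (Fac n v).getD (14*j+6) 0 = v.getD j 0 := by
  unfold Fac
  rw [List.getD_eq_getElem _ _ (by simpa using hjn)]
  simp only [List.getElem_map, List.getElem_range]
  have e : 14 * occ v + (14*j+6) = 14*(occ v + j) + 6 := by ring
  rw [e, W_x]
  exact occ_spec v j hj

lemma many_factors (n : ℕ) :
    2 ^ (n / 14) ≤ {u : List (Fin 2) | u.length = n ∧ FactorI u W}.ncard := by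
  set m := n / 14 with hm
  set S := {u : List (Fin 2) | u.length = n ∧ FactorI u W} with hS
  have hSfin : S.Finite := by
    apply Set.Finite.subset (Set.finite_range (List.ofFn : (Fin n → Fin 2) → List (Fin 2)))
    rintro u ⟨hu, -⟩
    refine ⟨fun j => u.getD j 0, ?_⟩
    apply List.ext_getElem (by simp [hu])
    intro i h1 h2
    simp only [List.getElem_ofFn]
    rw [List.getD_eq_getElem _ _ h2]
  let Φ : (Fin m → Fin 2) → List (Fin 2) := fun f => Fac n (List.ofFn f)
  have hΦinj : Function.Injective Φ := by
    intro f g hfg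
    funext j
    have hjf : (j:ℕ) < (List.ofFn f).length := by simp
    have hjg : (j:ℕ) < (List.ofFn g).length := by simp
    have hn14 : 14*(j:ℕ) + 6 < n := by have := j.2; omega
    have h1 := Fac_decode n (List.ofFn f) j hjf hn14
    have h2 := Fac_decode n (List.ofFn g) j hjg hn14
    have hfg' : Fac n (List.ofFn f) = Fac n (List.ofFn g) := hfg
    rw [hfg'] at h1
    have h3 := h1.symm.trans h2
    rw [List.getD_eq_getElem _ _ hjf, List.getD_eq_getElem _ _ hjg] at h3
    simpa using h3
  have hsub : Set.range Φ ⊆ S := by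
    rintro _ ⟨f, rfl⟩
    exact ⟨Fac_length n _, Fac_factor n _⟩
  have hcard : (Set.range Φ).ncard = 2 ^ m := by
    rw [← Nat.card_coe_set_eq, Nat.card_range_of_injective hΦinj]
    simp [Nat.card_eq_fintype_card]
  calc 2 ^ m = (Set.range Φ).ncard := hcard.symm
    _ ≤ S.ncard := Set.ncard_le_ncard hsub hSfin

end CFW

/-- There is an infinite cubefree binary word with exponential factor complexity. -/
theorem cubefree_word_exponential_complexity :
    ∃ (w : ℕ → Fin 2) (C c : ℝ), 0 < C ∧ 1 < c ∧ CubefreeI w ∧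
      ∀ n : ℕ, 0 < n →
        C * c ^ n ≤ ({u : List (Fin 2) | u.length = n ∧ FactorI u w}.ncard : ℝ) := by
  refine ⟨CFW.W, 1/2, (2:ℝ) ^ ((1:ℝ)/14), by norm_num, ?_, CFW.W_cubefree, ?_⟩
  · rw [Real.one_lt_rpow_iff_of_pos (by norm_num)]
    left
    constructor <;> norm_num
  · intro n hn
    have h1 : ((2:ℝ) ^ ((1:ℝ)/14)) ^ n = (2:ℝ) ^ ((n:ℝ)/14) := by
      rw [← Real.rpow_natCast ((2:ℝ) ^ ((1:ℝ)/14)) n, ← Real.rpow_mul (by norm_num)]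
      congr 1
      ring
    have hfloor : (n:ℝ)/14 - 1 ≤ ((n/14 : ℕ) : ℝ) := by
      have h' : n < 14*(n/14) + 14 := by omega
      have h'' : (n:ℝ) < 14*((n/14 : ℕ):ℝ) + 14 := by exact_mod_cast h'
      linarith
    have h2 : (1/2 : ℝ) * (2:ℝ) ^ ((n:ℝ)/14) ≤ (2:ℝ) ^ (((n/14 : ℕ)):ℝ) := by
      have e : (1/2 : ℝ) * (2:ℝ) ^ ((n:ℝ)/14) = (2:ℝ) ^ ((n:ℝ)/14 - 1) := by
        rw [Real.rpow_sub (by norm_num), Real.rpow_one]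
        ring
      rw [e]
      exact Real.rpow_le_rpow_of_exponent_le (by norm_num) hfloor
    have h3 := CFW.many_factors n
    have h4 : ((2:ℕ) ^ (n/14) : ℝ) ≤
        (({u : List (Fin 2) | u.length = n ∧ FactorI u CFW.W}.ncard : ℕ) : ℝ) := by
      exact_mod_cast h3
    have h5 : (2:ℝ) ^ (((n/14 : ℕ)):ℝ) = ((2:ℕ) ^ (n/14) : ℝ) := by
      rw [Real.rpow_natCast]
      push_cast
      ring
    rw [h1]
    linarith
end
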